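/- Let (R, m) be a Noetherian local ring of dimension d and 1 ≤ s ≤ d−1. Define b_s(R) = ⋂_x Ann((Q_s : x_{s+1})/Q_s), c_s(R) = ⋂_{x,n} Ann((Q_s^n : x_{s+1})/Q_s^n), and d_s(R) = ⋂_{x,n} Ann((⋂_{α∈Λ_{s,n}} Q_s(α))/Q_s^n), all intersections over systems of parameters x = x_1,…,x_d of R (and n ≥ 1), where Q_s = (x_1,…,x_s). Then b_s(R)·d_s(R) ⊆ c_s(R). -/

import Mathlib

/-- `x` is a system of parameters of the local ring `R`. -/
def IsSOP (R : Type*) [CommRing R] [IsLocalRing R] {d : ℕ} (x : Fin d → R) : Prop :=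
  (∀ i, x i ∈ IsLocalRing.maximalIdeal R) ∧
    (Ideal.span (Set.range x)).radical = IsLocalRing.maximalIdeal R

/-- `Q_s = (x_1, …, x_s)`. -/
def Qup {R : Type*} [CommRing R] {d : ℕ} (x : Fin d → R) (s : ℕ) : Ideal R :=
  Ideal.span (x '' {i | (i : ℕ) < s})

/-- `α ∈ Λ_{s,n}`: the first `s` entries are positive and sum to `s + n - 1`. -/
def IsLam {d : ℕ} (s n : ℕ) (α : Fin d → ℕ) : Prop :=
  (∀ i : Fin d, (i : ℕ) < s → 1 ≤ α i) ∧
    (∑ i ∈ Finset.univ.filter (fun i : Fin d => (i : ℕ) < s), α i) = s + n - 1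

/-- `Q_s(α) = (x_1^{α_1}, …, x_s^{α_s})`. -/
def PQ {R : Type*} [CommRing R] {d : ℕ} (x : Fin d → R) (s : ℕ) (α : Fin d → ℕ) : Ideal R :=
  Ideal.span ((fun i => x i ^ α i) '' {i | (i : ℕ) < s})

/-- `b_s(R)`. -/
noncomputable def bs (R : Type*) [CommRing R] [IsLocalRing R] {d : ℕ} (s : Fin d) : Ideal R :=
  ⨅ (x : Fin d → R) (_ : IsSOP R x),
    Submodule.colon (Qup x (s : ℕ))
      (Submodule.colon (Qup x (s : ℕ)) (Ideal.span {x s}))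

/-- `c_s(R)`. -/
noncomputable def cs (R : Type*) [CommRing R] [IsLocalRing R] {d : ℕ} (s : Fin d) : Ideal R :=
  ⨅ (x : Fin d → R) (_ : IsSOP R x) (n : ℕ) (_ : 1 ≤ n),
    Submodule.colon (Qup x (s : ℕ) ^ n)
      (Submodule.colon (Qup x (s : ℕ) ^ n) (Ideal.span {x s}))

/-- `d_s(R)`. -/
noncomputable def ds (R : Type*) [CommRing R] [IsLocalRing R] (d s : ℕ) : Ideal R :=
  ⨅ (x : Fin d → R) (_ : IsSOP R x) (n : ℕ) (_ : 1 ≤ n),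
    Submodule.colon (Qup x s ^ n) (⨅ (α : Fin d → ℕ) (_ : IsLam s n α), PQ x s α)

/-! For `α ∈ Λ_{s,n}`, replacing `x_i` by `x_i ^ α_i` for `i ≤ s` gives a system of parameters
with `Q_s = Q_s(α)` and the same `x_{s+1}`, and `Q_s^n ⊆ Q_s(α)` by pigeonhole. So for `a ∈ b_s`
and `r ∈ (Q_s^n : x_{s+1})`, `a r` lies in every `Q_s(α)`, which `d_s` multiplies into `Q_s^n`. -/

open Finset

namespace Ideal

variable {R ι : Type*} [CommRing R]

theorem radical_span_range_pow (x : ι → R) {k : ι → ℕ} (hk : ∀ i, k i ≠ 0) :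
    (span (Set.range fun i => x i ^ k i)).radical = (span (Set.range x)).radical := by
  refine le_antisymm (radical_mono (span_le.2 ?_)) (radical_le_radical_iff.2 (span_le.2 ?_))
  · rintro _ ⟨i, rfl⟩
    exact pow_mem_of_mem _ (subset_span (Set.mem_range_self i)) _ (Nat.pos_of_ne_zero (hk i))
  · rintro _ ⟨i, rfl⟩
    exact ⟨k i, subset_span (Set.mem_range_self i)⟩

/-- Pigeonhole: a product of `n` of the `x i`, `i ∈ S`, is divisible by some `x i ^ α i`
once `∑ i ∈ S, (α i - 1) < n`. -/
theorem span_image_pow_le_span_image_pow (x : ι → R) (S : Finset ι) :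
    ∀ (n : ℕ) (α : ι → ℕ), ∑ i ∈ S, α i < n + #S →
      span (x '' S) ^ n ≤ span ((fun i => x i ^ α i) '' S)
  | 0, α, h => by
    obtain ⟨i, hi, hαi⟩ : ∃ i ∈ S, α i < 1 :=
      exists_lt_of_sum_lt (g := fun _ => 1)
        (by rwa [sum_const, smul_eq_mul, mul_one, ← zero_add #S])
    rw [pow_zero, one_eq_top, top_le_iff, eq_top_iff_one]
    exact subset_span ⟨i, hi, by simp [Nat.lt_one_iff.1 hαi]⟩
  | n + 1, α, h => by
    classical
    rw [pow_succ', mul_le]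
    refine fun r hr t ht => Submodule.mem_colon_singleton.1 (span_le.2 ?_ hr)
    rintro _ ⟨j, hj, rfl⟩
    rw [SetLike.mem_coe, Submodule.mem_colon_singleton, smul_eq_mul]
    by_cases hαj : α j ≤ 1
    · refine mul_mem_right _ _ (mem_of_dvd _ ?_ (subset_span ⟨j, hj, rfl⟩))
      simpa using pow_dvd_pow (x j) hαj
    obtain ⟨β, hβj, hβ⟩ : ∃ β : ι → ℕ, β j + 1 = α j ∧ ∀ i ≠ j, β i = α i :=
      ⟨Function.update α j (α j - 1), by simp only [Function.update_self]; omega,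
        fun i hi => Function.update_of_ne hi _ _⟩
    have hsum : ∑ i ∈ S, β i + 1 = ∑ i ∈ S, α i := by
      rw [← add_sum_erase _ _ hj, ← add_sum_erase _ _ hj,
        sum_congr rfl fun i hi => hβ i (ne_of_mem_erase hi), ← hβj]
      ring
    have ht' := span_image_pow_le_span_image_pow x S n β (by omega) ht
    rw [mul_comm]
    refine Submodule.mem_colon_singleton.1 (span_le.2 ?_ ht')
    rintro _ ⟨i, hi, rfl⟩
    rw [SetLike.mem_coe, Submodule.mem_colon_singleton, smul_eq_mul]
    refine mem_of_dvd _ ?_ (subset_span ⟨i, hi, rfl⟩)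
    dsimp only
    obtain rfl | hij := eq_or_ne i j
    · rw [← pow_succ, hβj]
    · exact hβ i hij ▸ dvd_mul_right _ _

end Ideal

theorem IsSOP.pow {R : Type*} [CommRing R] [IsLocalRing R] {d : ℕ} {x : Fin d → R}
    (hx : IsSOP R x) {k : Fin d → ℕ} (hk : ∀ i, k i ≠ 0) : IsSOP R fun i => x i ^ k i :=
  ⟨fun i => Ideal.pow_mem_of_mem _ (hx.1 i) _ (Nat.pos_of_ne_zero (hk i)),
    (Ideal.radical_span_range_pow x hk).trans hx.2⟩

section

variable {R : Type*} [CommRing R] {d : ℕ}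

theorem Qup_pow_le_PQ (x : Fin d → R) {s n : ℕ} (hsd : s ≤ d) (hn : 1 ≤ n) {α : Fin d → ℕ}
    (hα : IsLam s n α) : Qup x s ^ n ≤ PQ x s α := by
  have hS : ((univ.filter fun i : Fin d => (i : ℕ) < s : Finset (Fin d)) : Set (Fin d)) =
      {i : Fin d | (i : ℕ) < s} := by
    ext; simp
  have := Ideal.span_image_pow_le_span_image_pow x _ n α
    (by rw [hα.2, Fin.card_filter_val_lt, min_eq_right hsd]; omega)
  rwa [hS] at this

theorem PQ_congr (x : Fin d → R) {s : ℕ} {α β : Fin d → ℕ}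
    (h : ∀ i : Fin d, (i : ℕ) < s → α i = β i) : PQ x s α = PQ x s β :=
  congrArg Ideal.span (Set.image_congr fun i hi => by rw [h i hi])

variable [IsLocalRing R]

theorem bs_le_colon_PQ {x : Fin d → R} (hx : IsSOP R x) (s : Fin d) {α : Fin d → ℕ}
    (hα : ∀ i : Fin d, (i : ℕ) < s → 1 ≤ α i) :
    bs R s ≤ (PQ x s α).colon ((PQ x s α).colon (Ideal.span {x s})) := by
  set k : Fin d → ℕ := fun i => if (i : ℕ) < s then α i else 1
  have hk : ∀ i, k i ≠ 0 := fun i => by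
    dsimp only [k]
    split_ifs with hi
    exacts [Nat.one_le_iff_ne_zero.1 (hα i hi), one_ne_zero]
  have hQ : Qup (fun i => x i ^ k i) s = PQ x s α := PQ_congr x fun i hi => if_pos hi
  have hxs : x s ^ k s = x s := by simp [k]
  unfold bs
  exact (iInf₂_le _ (hx.pow hk)).trans_eq (by simp only [hQ, hxs])

theorem ds_le_colon {x : Fin d → R} (hx : IsSOP R x) (s : ℕ) {n : ℕ} (hn : 1 ≤ n) :
    ds R d s ≤ (Qup x s ^ n).colon (⨅ (α : Fin d → ℕ) (_ : IsLam s n α), PQ x s α) := by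
  unfold ds
  exact (iInf₂_le x hx).trans (iInf₂_le n hn)

end

theorem stmt6_general {R : Type*} [CommRing R] [IsLocalRing R] {d : ℕ} (s : Fin d) :
    bs R s * ds R d (s : ℕ) ≤ cs R s := by
  refine le_iInf₂ fun x hx => le_iInf₂ fun n hn => Ideal.mul_le.2 fun a ha b hb => ?_
  refine Submodule.mem_colon.2 fun r hr => ?_
  have har : a * r ∈ ⨅ (α : Fin d → ℕ) (_ : IsLam s n α), (PQ x s α : Set R) := by
    refine Set.mem_iInter₂.2 fun α hα => ?_
    have hr' := Submodule.colon_mono (Qup_pow_le_PQ x s.isLt.le hn hα) le_rfl hr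
    exact Submodule.mem_colon.1 (bs_le_colon_PQ hx s hα.1 ha) r hr'
  have := Submodule.mem_colon.1 (ds_le_colon hx s hn hb) _ har
  rwa [smul_eq_mul, ← mul_assoc, mul_comm b] at this

theorem stmt6 {R : Type*} [CommRing R] [IsLocalRing R] [IsNoetherianRing R] {d : ℕ}
    (hd : ringKrullDim R = d) (s : Fin d) (hs : 1 ≤ (s : ℕ)) (hsd : (s : ℕ) ≤ d - 1) :
    bs R s * ds R d (s : ℕ) ≤ cs R s :=
  stmt6_general s
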